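/- arXiv:2305.02436 — 2 statements merged into one kernel-verified Lean document; each statement's English description precedes it below -/
import Mathlib

section
/- The group SL_2(Z[i]) is generated by the matrices S = [[0,-1],[1,0]], T = [[1,1],[0,1]], U = [[1,i],[0,1]], and R = [[0,i],[i,0]]. -/
open Matrix

/-- `i` in the Gaussian integers `ℤ[i]`. -/
noncomputable def gi : GaussianInt := ⟨0, 1⟩

noncomputable def Smat : Matrix.SpecialLinearGroup (Fin 2) GaussianInt :=
  ⟨!![0, -1; 1, 0], by simp [Matrix.det_fin_two_of]⟩

noncomputable def Tmat : Matrix.SpecialLinearGroup (Fin 2) GaussianInt :=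
  ⟨!![1, 1; 0, 1], by simp [Matrix.det_fin_two_of]⟩

noncomputable def Umat : Matrix.SpecialLinearGroup (Fin 2) GaussianInt :=
  ⟨!![1, gi; 0, 1], by simp [Matrix.det_fin_two_of]⟩

noncomputable def Rmat : Matrix.SpecialLinearGroup (Fin 2) GaussianInt :=
  ⟨!![0, gi; gi, 0], by simp [Matrix.det_fin_two_of, gi]; decide⟩

set_option linter.unnecessarySeqFocus false

noncomputable abbrev Hgrp : Subgroup (Matrix.SpecialLinearGroup (Fin 2) GaussianInt) :=
  Subgroup.closure ({Smat, Tmat, Umat, Rmat} : Set _)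

lemma S_mem : Smat ∈ Hgrp := Subgroup.subset_closure (by simp)
lemma T_mem : Tmat ∈ Hgrp := Subgroup.subset_closure (by simp)
lemma U_mem : Umat ∈ Hgrp := Subgroup.subset_closure (by simp)
lemma R_mem : Rmat ∈ Hgrp := Subgroup.subset_closure (by simp)

noncomputable def upperM (z : GaussianInt) : Matrix.SpecialLinearGroup (Fin 2) GaussianInt :=
  ⟨!![1, z; 0, 1], by simp [Matrix.det_fin_two_of]⟩

lemma upperM_mul (z w : GaussianInt) : upperM z * upperM w = upperM (z + w) := by
  apply Subtype.ext
  show (upperM z : Matrix (Fin 2) (Fin 2) GaussianInt) * (upperM w) = _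
  refine Matrix.ext fun i j => ?_
  fin_cases i <;> fin_cases j <;>
    simp [upperM, Matrix.mul_apply, Fin.sum_univ_two] <;> ring

lemma Tmat_eq : Tmat = upperM 1 := rfl
lemma Umat_eq : Umat = upperM gi := rfl

lemma upper_int_mem (a : ℤ) : upperM (a : GaussianInt) ∈ Hgrp := by
  induction a using Int.induction_on with
  | zero => have : upperM ((0:ℤ) : GaussianInt) = 1 := by
              apply Subtype.ext
              show (!![1, ((0:ℤ):GaussianInt); 0, 1] : Matrix (Fin 2) (Fin 2) GaussianInt) = 1
              norm_num; exact Matrix.one_fin_two.symm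
            rw [this]; exact one_mem _
  | succ a ha =>
      have : upperM ((a:GaussianInt)) * Tmat = upperM (((a:ℤ)+1 : ℤ) : GaussianInt) := by
        rw [Tmat_eq, upperM_mul]; push_cast; ring_nf
      rw [← this]; exact mul_mem ha T_mem
  | pred a ha =>
      have : upperM (((-a:ℤ)-1 : ℤ) : GaussianInt) * Tmat = upperM ((-a:ℤ) : GaussianInt) := by
        rw [Tmat_eq, upperM_mul]; push_cast; ring_nf
      exact (Subgroup.mul_mem_cancel_right _ T_mem).mp (this ▸ ha)

lemma upper_gi_mem (b : ℤ) : upperM ((b : GaussianInt) * gi) ∈ Hgrp := by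
  induction b using Int.induction_on with
  | zero => have : upperM (((0:ℤ):GaussianInt) * gi) = 1 := by
              apply Subtype.ext
              show (!![1, ((0:ℤ):GaussianInt) * gi; 0, 1] : Matrix (Fin 2) (Fin 2) GaussianInt) = 1
              norm_num; exact Matrix.one_fin_two.symm
            rw [this]; exact one_mem _
  | succ b hb =>
      have : upperM ((b:GaussianInt) * gi) * Umat = upperM ((((b:ℤ)+1 : ℤ) : GaussianInt) * gi) := by
        rw [Umat_eq, upperM_mul]; push_cast; ring_nf
      rw [← this]; exact mul_mem hb U_mem
  | pred b hb =>
      have : upperM ((((-b:ℤ)-1 : ℤ) : GaussianInt) * gi) * Umat = upperM (((-b:ℤ) : GaussianInt) * gi) := by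
        rw [Umat_eq, upperM_mul]; push_cast; ring_nf
      exact (Subgroup.mul_mem_cancel_right _ U_mem).mp (this ▸ hb)

lemma upper_mem (z : GaussianInt) : upperM z ∈ Hgrp := by
  have hz : z = (z.re : GaussianInt) + (z.im : GaussianInt) * gi := by
    ext <;> simp [gi]
  rw [hz, ← upperM_mul]
  exact mul_mem (upper_int_mem z.re) (upper_gi_mem z.im)

lemma gauss_unit {a b : GaussianInt} (h : a * b = 1) :
    (a = 1 ∧ b = 1) ∨ (a = -1 ∧ b = -1) ∨ (a = gi ∧ b = -gi) ∨ (a = -gi ∧ b = gi) := by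
  have hnorm : a.norm * b.norm = 1 := by rw [← Zsqrtd.norm_mul, h, Zsqrtd.norm_one]
  have hna : a.norm = 1 := by
    have h0 : 0 ≤ a.norm := Zsqrtd.norm_nonneg (by norm_num) a
    exact Int.eq_one_of_mul_eq_one_right h0 hnorm
  have hre : a.re * b.re + (-1) * a.im * b.im = 1 := by
    have := congrArg Zsqrtd.re h
    simpa [Zsqrtd.re_mul] using this
  have him : a.re * b.im + a.im * b.re = 0 := by
    have := congrArg Zsqrtd.im h
    simpa [Zsqrtd.im_mul] using this
  have hsum : a.re * a.re + a.im * a.im = 1 := by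
    have := hna
    rw [Zsqrtd.norm_def] at this
    linarith
  have h1 : a.re ≤ 1 := by nlinarith [sq_nonneg a.im, sq_nonneg a.re]
  have h2 : -1 ≤ a.re := by nlinarith [sq_nonneg a.im, sq_nonneg a.re]
  have h3 : a.im ≤ 1 := by nlinarith [sq_nonneg a.im, sq_nonneg a.re]
  have h4 : -1 ≤ a.im := by nlinarith [sq_nonneg a.im, sq_nonneg a.re]
  simp only [Zsqrtd.ext_iff, gi, Zsqrtd.re_one, Zsqrtd.im_one, Zsqrtd.re_neg, Zsqrtd.im_neg]
  norm_num
  interval_cases hh : a.re <;> interval_cases hh2 : a.im <;> omega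

lemma coe_fn_eq (g : Matrix.SpecialLinearGroup (Fin 2) GaussianInt) (i j : Fin 2) :
    g i j = (g : Matrix (Fin 2) (Fin 2) GaussianInt) i j := rfl

-- diagonal helper matrices
lemma Dneg_eq : Smat * Smat =
    (⟨!![-1, 0; 0, -1], by simp [Matrix.det_fin_two_of]⟩ :
      Matrix.SpecialLinearGroup (Fin 2) GaussianInt) := by
  apply Subtype.ext
  show (Smat : Matrix (Fin 2) (Fin 2) GaussianInt) * Smat = _
  refine Matrix.ext fun i j => ?_
  fin_cases i <;> fin_cases j <;> simp [Smat, Matrix.mul_apply, Fin.sum_univ_two]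

lemma gi_mul_neg_gi : gi * (-gi) = 1 := by
  ext <;> simp [gi, Zsqrtd.re_mul, Zsqrtd.im_mul]

lemma Di_eq : Rmat * Smat =
    (⟨!![gi, 0; 0, -gi], by simp [Matrix.det_fin_two_of]; decide⟩ :
      Matrix.SpecialLinearGroup (Fin 2) GaussianInt) := by
  apply Subtype.ext
  show (Rmat : Matrix (Fin 2) (Fin 2) GaussianInt) * Smat = _
  refine Matrix.ext fun i j => ?_
  fin_cases i <;> fin_cases j <;> simp [Rmat, Smat, Matrix.mul_apply, Fin.sum_univ_two]

lemma triangular_mem (g : Matrix.SpecialLinearGroup (Fin 2) GaussianInt)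
    (h0 : (g : Matrix (Fin 2) (Fin 2) GaussianInt) 1 0 = 0) : g ∈ Hgrp := by
  have hdet : (g : Matrix (Fin 2) (Fin 2) GaussianInt).det = 1 := g.2
  rw [Matrix.det_fin_two] at hdet
  rw [h0, mul_zero, sub_zero] at hdet
  have gi_sq : gi * gi = -1 := by decide
  have negi_gi : (-gi) * gi = 1 := by decide
  rcases gauss_unit hdet with ⟨h00, h11⟩ | ⟨h00, h11⟩ | ⟨h00, h11⟩ | ⟨h00, h11⟩
  · have : g = upperM ((g : Matrix (Fin 2) (Fin 2) GaussianInt) 0 1) := by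
      apply Subtype.ext
      refine Matrix.ext fun i j => ?_
      fin_cases i <;> fin_cases j <;> simp [upperM, h0, h00, h11]
    rw [this]; exact upper_mem _
  · have : g = (Smat * Smat) * upperM (-(g : Matrix (Fin 2) (Fin 2) GaussianInt) 0 1) := by
      apply Subtype.ext
      refine Matrix.ext fun i j => ?_
      fin_cases i <;> fin_cases j <;>
        simp only [Matrix.SpecialLinearGroup.coe_mul] <;> simp [upperM, Smat, Matrix.mul_apply, Fin.sum_univ_two, h0, h00, h11]
    rw [this]; exact mul_mem (mul_mem S_mem S_mem) (upper_mem _)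
  · have : g = (Rmat * Smat) * upperM ((-gi) * (g : Matrix (Fin 2) (Fin 2) GaussianInt) 0 1) := by
      apply Subtype.ext
      refine Matrix.ext fun i j => ?_
      fin_cases i <;> fin_cases j <;>
        simp only [Matrix.SpecialLinearGroup.coe_mul] <;> simp [upperM, Rmat, Smat, Matrix.mul_apply, Fin.sum_univ_two, h0, h00, h11,
          ← mul_assoc, negi_gi, gi_sq]
    rw [this]; exact mul_mem (mul_mem R_mem S_mem) (upper_mem _)
  · have key : (Rmat * Smat) * g = upperM (gi * (g : Matrix (Fin 2) (Fin 2) GaussianInt) 0 1) := by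
      apply Subtype.ext
      refine Matrix.ext fun i j => ?_
      fin_cases i <;> fin_cases j <;>
        simp only [Matrix.SpecialLinearGroup.coe_mul] <;> simp [upperM, Rmat, Smat, Matrix.mul_apply, Fin.sum_univ_two, h0, h00, h11,
          ← mul_assoc, negi_gi, gi_sq]
    have := (Subgroup.mul_mem_cancel_left Hgrp (mul_mem R_mem S_mem)).mp
      (key ▸ upper_mem (gi * (g : Matrix (Fin 2) (Fin 2) GaussianInt) 0 1))
    exact this

lemma main_aux : ∀ n : ℕ, ∀ g : Matrix.SpecialLinearGroup (Fin 2) GaussianInt,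
    ((g : Matrix (Fin 2) (Fin 2) GaussianInt) 1 0).norm.natAbs = n → g ∈ Hgrp := by
  intro n
  induction n using Nat.strong_induction_on with
  | _ n ih =>
    intro g hg
    by_cases h0 : (g : Matrix (Fin 2) (Fin 2) GaussianInt) 1 0 = 0
    · exact triangular_mem g h0
    · set a := (g : Matrix (Fin 2) (Fin 2) GaussianInt) 0 0 with ha
      set c := (g : Matrix (Fin 2) (Fin 2) GaussianInt) 1 0 with hc
      set q := a / c with hq
      have hentry : ((Smat * (upperM (-q) * g) :
          Matrix.SpecialLinearGroup (Fin 2) GaussianInt) :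
          Matrix (Fin 2) (Fin 2) GaussianInt) 1 0 = a % c := by
        rw [EuclideanDomain.mod_eq_sub_mul_div]
        simp only [Matrix.SpecialLinearGroup.coe_mul]
        simp [upperM, Smat, Matrix.mul_apply, Matrix.vecMul, dotProduct, Fin.sum_univ_two, ← ha, ← hc, ← hq]
        ring
      have hlt : ((a % c).norm.natAbs) < n := by
        rw [← hg]
        exact GaussianInt.natAbs_norm_mod_lt a h0
      have hg' : Smat * (upperM (-q) * g) ∈ Hgrp := by
        apply ih _ hlt _ (by rw [hentry])
      have := (Subgroup.mul_mem_cancel_left Hgrp S_mem).mp hg'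
      exact (Subgroup.mul_mem_cancel_left Hgrp (upper_mem (-q))).mp this

/-- The group `SL₂(ℤ[i])` is generated by the matrices `S`, `T`, `U`, `R`. -/
theorem sl2_gaussian_generated :
    Subgroup.closure ({Smat, Tmat, Umat, Rmat} :
      Set (Matrix.SpecialLinearGroup (Fin 2) GaussianInt)) = ⊤ := by
  rw [eq_top_iff]
  rintro g -
  exact main_aux _ g rfl
end

section
/- Let O be the ring of integers of an imaginary quadratic field K and let P be a nonzero prime ideal of O. Then the congruence subgroup Γ_0(P) = { [[a,b],[c,d]] ∈ SL_2(O) : c ∈ P } is not contained in Γ(u,v) = { A ∈ SL_2(O) : (u,v)A = (u,v) } for any nonzero pair (u,v) ∈ (C/K)^2. -/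
open Matrix

/-! Γ₀(P) contains the transvection `[[1, 1], [0, 1]]`, which sends `(u, v)` to `(u, u + v)`, and,
for every `p ∈ P`, the transvection `[[1, 0], [p, 1]]`, which sends `(u, v)` to `(u + p v, v)`.
Taking `p ≠ 0`, the first moves `(u, v)` modulo `K` unless `u ∈ K`, the second unless `v ∈ K`. -/

namespace Subfield

theorem mem_of_mul_mem_of_ne_zero {F : Type*} [Field F] {K : Subfield F} {x c : F}
    (hxc : x * c ∈ K) (hc : c ∈ K) (hc0 : c ≠ 0) : x ∈ K := by
  simpa [hc0] using K.div_mem hxc hc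

end Subfield

section FixesModulo

variable {F : Type*} [Field F] (K : Subfield F) {S : Subalgebra ℤ K}

/-- `A ∈ Γ(u, v)`: `(u, v) A = (u, v)` in `(F / K)²`, for `A ∈ SL₂(S)` with `S` a subring of `K`. -/
def FixesModulo (u v : F) (A : SpecialLinearGroup (Fin 2) S) : Prop :=
  u * ((A.1 0 0 : K) : F) + v * ((A.1 1 0 : K) : F) - u ∈ K ∧
    u * ((A.1 0 1 : K) : F) + v * ((A.1 1 1 : K) : F) - v ∈ K

variable {K}

theorem fixesModulo_transvection_zero_one_iff (u v : F) (b : S) :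
    FixesModulo K u v (SpecialLinearGroup.transvection (zero_ne_one' (Fin 2)) b) ↔
      u * ((b : K) : F) ∈ K := by
  simp [FixesModulo, SpecialLinearGroup.transvection_coe]

theorem fixesModulo_transvection_one_zero_iff (u v : F) (c : S) :
    FixesModulo K u v (SpecialLinearGroup.transvection (one_ne_zero' (Fin 2)) c) ↔
      v * ((c : K) : F) ∈ K := by
  simp [FixesModulo, SpecialLinearGroup.transvection_coe]

end FixesModulo

theorem gamma0_not_subset_stabilizer_general
    (K : Subfield ℂ)
    (P : Ideal (integralClosure ℤ ↥K)) (hPne : P ≠ ⊥)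
    -- a nonzero element `(u,v)` of `(ℂ/K)²`, represented by lifts `u v : ℂ`
    (u v : ℂ) (huv : u ∉ K ∨ v ∉ K) :
    ∃ A : Matrix.SpecialLinearGroup (Fin 2) (integralClosure ℤ ↥K),
      -- `A ∈ Γ₀(P)`
      A.1 1 0 ∈ P ∧
      -- `A ∉ Γ(u,v)`, i.e. `(u,v)A ≠ (u,v)` in `(ℂ/K)²`
      ¬ ((u * ((A.1 0 0 : ↥K) : ℂ) + v * ((A.1 1 0 : ↥K) : ℂ) - u ∈ K) ∧
         (u * ((A.1 0 1 : ↥K) : ℂ) + v * ((A.1 1 1 : ↥K) : ℂ) - v ∈ K)) := by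
  rcases huv with hu | hv
  · refine ⟨SpecialLinearGroup.transvection (zero_ne_one' (Fin 2)) 1, ?_, ?_⟩
    · simp [SpecialLinearGroup.transvection_coe]
    · rw [← FixesModulo, fixesModulo_transvection_zero_one_iff]
      simpa using hu
  · obtain ⟨p, hpP, hp0⟩ := Submodule.exists_mem_ne_zero_of_ne_bot hPne
    refine ⟨SpecialLinearGroup.transvection (one_ne_zero' (Fin 2)) p, ?_, ?_⟩
    · simpa [SpecialLinearGroup.transvection_coe] using hpP
    · rw [← FixesModulo, fixesModulo_transvection_one_zero_iff]
      exact fun hvp => hv (Subfield.mem_of_mul_mem_of_ne_zero hvp (p : K).2 (by simpa using hp0))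

/-- `Γ₀(P)` is not contained in `Γ(u,v)` for any nonzero `(u,v) ∈ (ℂ/K)²`. -/
theorem gamma0_not_subset_stabilizer
    (K : Subfield ℂ)
    -- `K` is quadratic over `ℚ`
    (hquad : Module.finrank ℚ ↥K = 2)
    -- `K` is imaginary
    (himag : ∃ z ∈ K, z.im ≠ 0)
    (P : Ideal (integralClosure ℤ ↥K)) (hP : P.IsPrime) (hPne : P ≠ ⊥)
    -- a nonzero element `(u,v)` of `(ℂ/K)²`, represented by lifts `u v : ℂ`
    (u v : ℂ) (huv : u ∉ K ∨ v ∉ K) :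
    ∃ A : Matrix.SpecialLinearGroup (Fin 2) (integralClosure ℤ ↥K),
      -- `A ∈ Γ₀(P)`
      A.1 1 0 ∈ P ∧
      -- `A ∉ Γ(u,v)`, i.e. `(u,v)A ≠ (u,v)` in `(ℂ/K)²`
      ¬ ((u * ((A.1 0 0 : ↥K) : ℂ) + v * ((A.1 1 0 : ↥K) : ℂ) - u ∈ K) ∧
         (u * ((A.1 0 1 : ↥K) : ℂ) + v * ((A.1 1 1 : ↥K) : ℂ) - v ∈ K)) :=
  gamma0_not_subset_stabilizer_general K P hPne u v huv
end
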